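/- There exists a unique z ∈ (0,1) such that 2^{1/z} · (2 + 2^{1/z})^z = 8, and for all α ∈ [z, 1], 2^{1/α}(2 + 2^{1/α})^α ≤ 8. -/

import Mathlib

open Real Set

noncomputable def sPsi (x : ℝ) : ℝ := Real.log (2 + Real.exp x)

lemma sPsi_hasDeriv (x : ℝ) :
    HasDerivAt sPsi (Real.exp x / (2 + Real.exp x)) x := by
  have h : HasDerivAt (fun y : ℝ => 2 + Real.exp y) (Real.exp x) x :=
    (Real.hasDerivAt_exp x).const_add 2
  exact h.log (by positivity)

lemma sPsi_convex : ConvexOn ℝ Set.univ sPsi := by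
  apply MonotoneOn.convexOn_of_deriv convex_univ
  · exact ((continuous_const.add Real.continuous_exp).log
      (fun x => (by positivity : (0:ℝ) < 2 + Real.exp x).ne')).continuousOn
  · exact fun x _ => (sPsi_hasDeriv x).differentiableAt.differentiableWithinAt
  · intro x _ y _ hxy
    rw [(sPsi_hasDeriv x).deriv, (sPsi_hasDeriv y).deriv]
    have hx := Real.exp_pos x
    have hy := Real.exp_pos y
    rw [div_le_div_iff₀ (by positivity) (by positivity)]
    have h := Real.exp_le_exp.2 hxy
    nlinarith

lemma sPhi_convex :
    ConvexOn ℝ (Set.Ioi (0:ℝ)) (fun α => α * sPsi (Real.log 2 / α)) := by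
  refine ⟨convex_Ioi 0, ?_⟩
  intro a ha b hb t s ht hs hts
  simp only [smul_eq_mul] at *
  have ha' : (0:ℝ) < a := ha
  have hb' : (0:ℝ) < b := hb
  have hα : 0 < t * a + s * b := by
    rcases ht.lt_or_eq with h | h
    · nlinarith [mul_nonneg hs hb'.le]
    · have : s = 1 := by linarith
      nlinarith
  set α := t * a + s * b with hαdef
  have hw1 : 0 ≤ t * a / α := by positivity
  have hw2 : 0 ≤ s * b / α := by positivity
  have hwsum : t * a / α + s * b / α = 1 := by field_simp; exact hαdef.symm
  have hkey : Real.log 2 / α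
      = (t * a / α) * (Real.log 2 / a) + (s * b / α) * (Real.log 2 / b) := by
    have e1 : t * a / α * (Real.log 2 / a) = t * (Real.log 2 / α) := by
      field_simp
    have e2 : s * b / α * (Real.log 2 / b) = s * (Real.log 2 / α) := by
      field_simp
    rw [e1, e2, ← add_mul, hts, one_mul]
  have hconv := sPsi_convex.2 (Set.mem_univ (Real.log 2 / a))
    (Set.mem_univ (Real.log 2 / b)) hw1 hw2 hwsum
  simp only [smul_eq_mul] at hconv
  rw [← hkey] at hconv
  calc α * sPsi (Real.log 2 / α)
      ≤ α * ((t * a / α) * sPsi (Real.log 2 / a) + (s * b / α) * sPsi (Real.log 2 / b)) :=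
        mul_le_mul_of_nonneg_left hconv hα.le
    _ = t * (a * sPsi (Real.log 2 / a)) + s * (b * sPsi (Real.log 2 / b)) := by
        field_simp

lemma sInv_strictConvex :
    StrictConvexOn ℝ (Set.Ioi (0:ℝ)) (fun α : ℝ => Real.log 2 / α) := by
  have h := strictConvexOn_zpow (m := -1) (by norm_num) (by norm_num)
  refine ⟨convex_Ioi 0, ?_⟩
  intro x hx y hy hxy t s ht hs hts
  have h2 := h.2 hx hy hxy ht hs hts
  simp only [smul_eq_mul, zpow_neg, zpow_one] at h2 ⊢
  have hlog : 0 < Real.log 2 := Real.log_pos (by norm_num)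
  have h3 := mul_lt_mul_of_pos_left h2 hlog
  rw [div_eq_mul_inv, div_eq_mul_inv, div_eq_mul_inv]
  nlinarith [h3]

noncomputable def sG (α : ℝ) : ℝ := Real.log 2 / α + α * sPsi (Real.log 2 / α)

lemma sG_strictConvex : StrictConvexOn ℝ (Set.Ioi (0:ℝ)) sG := by
  have h := sInv_strictConvex.add_convexOn sPhi_convex
  exact h

lemma sF_pos {α : ℝ} (hα : 0 < α) :
    0 < (2:ℝ) ^ (1/α) * ((2 + (2:ℝ) ^ (1/α)) ^ α) := by positivity

lemma log_sF {α : ℝ} (hα : 0 < α) :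
    Real.log ((2:ℝ) ^ (1/α) * ((2 + (2:ℝ) ^ (1/α)) ^ α)) = sG α := by
  have h1 : (0:ℝ) < (2:ℝ) ^ (1/α) := by positivity
  have h2 : (0:ℝ) < 2 + (2:ℝ) ^ (1/α) := by positivity
  rw [Real.log_mul h1.ne' (Real.rpow_pos_of_pos h2 α).ne',
    Real.log_rpow (by norm_num : (0:ℝ) < 2), Real.log_rpow h2]
  have h3 : (2:ℝ) ^ (1/α) = Real.exp (Real.log 2 / α) := by
    rw [Real.rpow_def_of_pos (by norm_num : (0:ℝ) < 2), mul_one_div]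
  rw [h3, sG, sPsi, one_div, div_eq_mul_inv, mul_comm]

lemma sF_one : (2:ℝ) ^ (1/(1:ℝ)) * ((2 + (2:ℝ) ^ (1/(1:ℝ))) ^ (1:ℝ)) = 8 := by
  rw [show (1:ℝ)/1 = 1 by norm_num, Real.rpow_one, Real.rpow_one]
  norm_num

lemma sF_half : 8 < (2:ℝ) ^ (1/((1:ℝ)/2)) * ((2 + (2:ℝ) ^ (1/((1:ℝ)/2))) ^ ((1:ℝ)/2)) := by
  rw [show (1:ℝ)/((1:ℝ)/2) = 2 by norm_num]
  have h1 : (2:ℝ) ^ (2:ℝ) = 4 := by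
    rw [show (2:ℝ) = ((2:ℕ):ℝ) by norm_num, Real.rpow_natCast]; norm_num
  rw [h1]
  have h2 : (2:ℝ) < (6:ℝ) ^ ((1:ℝ)/2) := by
    have hsq : ((6:ℝ) ^ ((1:ℝ)/2)) ^ (2:ℕ) = 6 := by
      rw [← Real.rpow_natCast ((6:ℝ) ^ ((1:ℝ)/2)) 2, ← Real.rpow_mul (by norm_num)]
      norm_num
    have : (2:ℝ) ^ (2:ℕ) < ((6:ℝ) ^ ((1:ℝ)/2)) ^ (2:ℕ) := by rw [hsq]; norm_num
    exact lt_of_pow_lt_pow_left₀ 2 (by positivity) this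
  nlinarith [h2]

lemma sF_threequarters :
    (2:ℝ) ^ (1/((3:ℝ)/4)) * ((2 + (2:ℝ) ^ (1/((3:ℝ)/4))) ^ ((3:ℝ)/4)) < 8 := by
  rw [show (1:ℝ)/((3:ℝ)/4) = 4/3 by norm_num]
  set a := (2:ℝ) ^ ((4:ℝ)/3) with hadef
  have ha0 : 0 < a := by positivity
  have ha : a < 2.52 := by
    have hcube : a ^ (3:ℕ) = 16 := by
      rw [hadef, ← Real.rpow_natCast ((2:ℝ) ^ ((4:ℝ)/3)) 3,
        ← Real.rpow_mul (by norm_num)]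
      norm_num
    have : a ^ (3:ℕ) < (2.52:ℝ) ^ (3:ℕ) := by rw [hcube]; norm_num
    exact lt_of_pow_lt_pow_left₀ 3 (by norm_num) this
  have hb : (2 + a) ^ ((3:ℝ)/4) ≤ (4.52:ℝ) ^ ((3:ℝ)/4) :=
    Real.rpow_le_rpow (by positivity) (by linarith) (by norm_num)
  have hc : (4.52:ℝ) ^ ((3:ℝ)/4) < 3.15 := by
    have h4 : ((4.52:ℝ) ^ ((3:ℝ)/4)) ^ (4:ℕ) = (4.52:ℝ) ^ (3:ℕ) := by
      rw [← Real.rpow_natCast ((4.52:ℝ) ^ ((3:ℝ)/4)) 4, ← Real.rpow_mul (by norm_num)]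
      norm_num
    have : ((4.52:ℝ) ^ ((3:ℝ)/4)) ^ (4:ℕ) < (3.15:ℝ) ^ (4:ℕ) := by
      rw [h4]; norm_num
    exact lt_of_pow_lt_pow_left₀ 4 (by norm_num) this
  have hbpos : (0:ℝ) ≤ (2 + a) ^ ((3:ℝ)/4) := by positivity
  calc a * (2 + a) ^ ((3:ℝ)/4) ≤ a * (4.52:ℝ) ^ ((3:ℝ)/4) :=
        mul_le_mul_of_nonneg_left hb ha0.le
    _ < 2.52 * 3.15 := by
        apply mul_lt_mul' ha.le hc (by positivity) (by norm_num)
    _ < 8 := by norm_num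

/-- There is a unique z ∈ (0,1) with 2^{1/z}(2+2^{1/z})^z = 8,
and for all α ∈ [z,1], 2^{1/α}(2+2^{1/α})^α ≤ 8. -/
theorem stmt12 :
    ∃ z : ℝ, z ∈ Set.Ioo (0:ℝ) 1 ∧
      (2:ℝ) ^ (1/z) * ((2 + (2:ℝ) ^ (1/z)) ^ z) = 8 ∧
      (∀ z' ∈ Set.Ioo (0:ℝ) 1,
        (2:ℝ) ^ (1/z') * ((2 + (2:ℝ) ^ (1/z')) ^ z') = 8 → z' = z) ∧
      (∀ α ∈ Set.Icc z 1, (2:ℝ) ^ (1/α) * ((2 + (2:ℝ) ^ (1/α)) ^ α) ≤ 8) := by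
  set F : ℝ → ℝ := fun α => (2:ℝ) ^ (1/α) * ((2 + (2:ℝ) ^ (1/α)) ^ α) with hF
  -- continuity on [1/2, 3/4]
  have hcont : ContinuousOn F (Set.Icc ((1:ℝ)/2) ((3:ℝ)/4)) := by
    intro x hx
    have hx0 : (0:ℝ) < x := lt_of_lt_of_le (by norm_num) hx.1
    have c1 : ContinuousAt (fun α : ℝ => (2:ℝ) ^ (1/α)) x :=
      continuousAt_const.rpow (continuousAt_const.div continuousAt_id hx0.ne')
        (Or.inl (by norm_num))
    have c2 : ContinuousAt (fun α : ℝ => (2 + (2:ℝ) ^ (1/α)) ^ α) x := by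
      apply (continuousAt_const.add c1).rpow continuousAt_id
      left
      have : (0:ℝ) < 2 + (2:ℝ) ^ (1/x) := by positivity
      exact this.ne'
    exact (c1.mul c2).continuousWithinAt
  -- IVT
  have hivt : (8:ℝ) ∈ F '' Set.Icc ((1:ℝ)/2) ((3:ℝ)/4) := by
    apply intermediate_value_Icc' (by norm_num) hcont
    constructor
    · exact sF_threequarters.le
    · exact sF_half.le
  obtain ⟨z, hzmem, hFz⟩ := hivt
  have hz0 : (0:ℝ) < z := lt_of_lt_of_le (by norm_num) hzmem.1
  have hz1 : z < 1 := lt_of_le_of_lt hzmem.2 (by norm_num)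
  have hGz : sG z = Real.log 8 :=
    (log_sF hz0).symm.trans (congrArg Real.log hFz)
  have hG1 : sG 1 = Real.log 8 :=
    (log_sF (by norm_num : (0:ℝ) < 1)).symm.trans (congrArg Real.log sF_one)
  -- convexity bound: for α ∈ [z,1], sG α ≤ log 8
  have hbound : ∀ α ∈ Set.Icc z 1, sG α ≤ Real.log 8 := by
    intro α hα
    have hα0 : 0 < α := lt_of_lt_of_le hz0 hα.1
    have hden : (0:ℝ) < 1 - z := by linarith
    have ht : (0:ℝ) ≤ (1 - α) / (1 - z) := by
      apply div_nonneg _ hden.le; linarith [hα.2]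
    have hs : (0:ℝ) ≤ (α - z) / (1 - z) := by
      apply div_nonneg _ hden.le; linarith [hα.1]
    have hts : (1 - α) / (1 - z) + (α - z) / (1 - z) = 1 := by
      field_simp; ring
    have hcomb := sG_strictConvex.convexOn.2 (Set.mem_Ioi.2 hz0)
      (Set.mem_Ioi.2 (by norm_num : (0:ℝ) < 1)) ht hs hts
    simp only [smul_eq_mul, mul_one] at hcomb
    have heq : (1 - α) / (1 - z) * z + (α - z) / (1 - z) = α := by
      field_simp
      ring
    rw [heq, hGz, hG1] at hcomb
    calc sG α ≤ (1 - α) / (1 - z) * Real.log 8 + (α - z) / (1 - z) * Real.log 8 := hcomb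
      _ = Real.log 8 := by rw [← add_mul, hts, one_mul]
  -- strict: any other root in (0,1) coincides
  have hstrict : ∀ a b : ℝ, 0 < a → a < b → b < 1 →
      sG a = Real.log 8 → sG b ≠ Real.log 8 := by
    intro a b ha hab hb1 hGa
    have hden : (0:ℝ) < 1 - a := by linarith
    have ht : (0:ℝ) < (1 - b) / (1 - a) := by apply div_pos _ hden; linarith
    have hs : (0:ℝ) < (b - a) / (1 - a) := by apply div_pos _ hden; linarith
    have hts : (1 - b) / (1 - a) + (b - a) / (1 - a) = 1 := by field_simp; ring
    have hcomb := sG_strictConvex.2 (Set.mem_Ioi.2 ha)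
      (Set.mem_Ioi.2 (by norm_num : (0:ℝ) < 1)) (by linarith : a ≠ 1) ht hs hts
    simp only [smul_eq_mul, mul_one] at hcomb
    have heq : (1 - b) / (1 - a) * a + (b - a) / (1 - a) = b := by
      field_simp; ring
    rw [heq, hGa, hG1] at hcomb
    have : sG b < Real.log 8 := by
      calc sG b < (1 - b) / (1 - a) * Real.log 8 + (b - a) / (1 - a) * Real.log 8 := hcomb
        _ = Real.log 8 := by rw [← add_mul, hts, one_mul]
    exact this.ne
  refine ⟨z, ⟨hz0, hz1⟩, hFz, ?_, ?_⟩
  · intro z' hz' hFz'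
    have hz'0 : 0 < z' := hz'.1
    have hGz' : sG z' = Real.log 8 :=
      (log_sF hz'0).symm.trans (congrArg Real.log hFz')
    by_contra hne
    rcases lt_or_gt_of_ne hne with h | h
    · exact hstrict z' z hz'0 h hz1 hGz' hGz
    · exact hstrict z z' hz0 h hz'.2 hGz hGz'
  · intro α hα
    have hα0 : 0 < α := lt_of_lt_of_le hz0 hα.1
    have := hbound α hα
    rw [← log_sF hα0] at this
    have hFα : 0 < F α := sF_pos hα0
    calc F α = Real.exp (Real.log (F α)) := (Real.exp_log hFα).symm
      _ ≤ Real.exp (Real.log 8) := Real.exp_le_exp.2 this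
      _ = 8 := Real.exp_log (by norm_num)
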